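/- Let ℓ ≥ 1 be a fixed integer and let p = p(n) ∈ (0,1]. With probability tending to 1 as n → ∞, every orientation of the random graph G(n,p) is 1-locally-dense. -/

import Mathlib

open MeasureTheory Filter

/-- An orientation of a simple graph: each edge gets exactly one direction. -/
structure GraphOrientation {V : Type*} (G : SimpleGraph V) where
  dir : V → V → Prop
  dir_adj : ∀ ⦃u v⦄, dir u v → G.Adj u v
  total : ∀ ⦃u v⦄, G.Adj u v → dir u v ∨ dir v u
  asymm : ∀ ⦃u v⦄, dir u v → ¬ dir v u

namespace GraphOrientation

variable {V : Type*} {G : SimpleGraph V}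

/-- There is a directed path of length `r` from `u` to `v` in `D` avoiding the set `X`
(this is the edge relation of the digraph `(D \ X)^r`). -/
def PathEdge (D : GraphOrientation G) (X : Set V) (r : ℕ) (u v : V) : Prop :=
  ∃ c : Fin (r + 1) → V, Function.Injective c ∧ (∀ i, c i ∉ X) ∧
    c 0 = u ∧ c (Fin.last r) = v ∧
    ∀ i : Fin r, D.dir (c i.castSucc) (c i.succ)

/-- `D` contains a directed cycle of length `k`. -/
def HasDirCycle (D : GraphOrientation G) (k : ℕ) : Prop :=
  ∃ c : Fin k → V, Function.Injective c ∧
    ∀ i : Fin k, D.dir (c i) (c ⟨((i : ℕ) + 1) % k, Nat.mod_lt _ i.pos⟩)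

/-- The number `e↔_{(D\X)^r}(A,B)` of edges between `A` and `B` (in either direction)
in the digraph `(D \ X)^r`. -/
noncomputable def eBoth (D : GraphOrientation G) (X : Set V) (r : ℕ) (A B : Set V) : ℕ :=
  {q : V × V | q.1 ∈ A ∧ q.2 ∈ B ∧ D.PathEdge X r q.1 q.2}.ncard +
  {q : V × V | q.1 ∈ A ∧ q.2 ∈ B ∧ D.PathEdge X r q.2 q.1}.ncard

/-- The degree `d↔_{(D\X)^r}(a,B) = d⁺(a,B) + d⁻(a,B)` in the digraph `(D \ X)^r`. -/
noncomputable def dBoth (D : GraphOrientation G) (X : Set V) (r : ℕ) (a : V) (B : Set V) : ℕ :=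
  {b ∈ B | D.PathEdge X r a b}.ncard + {b ∈ B | D.PathEdge X r b a}.ncard

/-- `D` is `r`-locally dense w.r.t. edge probability `p`, parameter `ℓ`, vertex set `W`
and size parameter `a` (playing the role of `α = 2⁶ log n / p`). -/
def LocallyDense (D : GraphOrientation G) (W : Set V) (p : ℝ) (ℓ r : ℕ) (a : ℝ) : Prop :=
  ∀ A' B X : Set V, A' ⊆ W → B ⊆ W → X ⊆ W →
    Disjoint A' B → Disjoint A' X → Disjoint B X →
    (A'.ncard : ℝ) = a → (r : ℝ) * a ≤ B.ncard → (B.ncard : ℝ) ≤ (ℓ : ℝ) * a →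
    (X.ncard : ℝ) ≤ ((ℓ : ℝ) + 1 - r) * a →
    (1 / 2) * p ^ (((ℓ : ℝ) - r + 1) / ℓ) * A'.ncard * B.ncard ≤ (D.eBoth X r A' B : ℝ)

/-- `D` extends the orientation `Hd` of a subgraph. -/
def Extends (D : GraphOrientation G) {H : SimpleGraph V} (Hd : GraphOrientation H) : Prop :=
  ∀ ⦃u v⦄, Hd.dir u v → D.dir u v

end GraphOrientation

/-- The quantity `α = 2⁶ (log n) / p`. -/
noncomputable def alphaP (n : ℕ) (p : ℝ) : ℝ := 2 ^ 6 * Real.log n / p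

/-- A Bernoulli-type measure on `Bool` with success probability `p`. -/
noncomputable def bern (p : ℝ) : Measure Bool :=
  ENNReal.ofReal p • Measure.dirac true + ENNReal.ofReal (1 - p) • Measure.dirac false

instance bern.instIsFiniteMeasure (p : ℝ) : IsFiniteMeasure (bern p) := by
  constructor
  rw [bern]
  simp only [Measure.add_apply, Measure.smul_apply, smul_eq_mul]
  refine ENNReal.add_lt_top.2 ⟨?_, ?_⟩ <;>
    exact ENNReal.mul_lt_top ENNReal.ofReal_lt_top (measure_lt_top _ _)

/-- The product measure on edge-indicators modelling `G(n,p)`. -/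
noncomputable def gnp (n : ℕ) (p : ℝ) : Measure (Sym2 (Fin n) → Bool) :=
  Measure.pi fun _ => bern p

/-- The graph on `Fin n` determined by the edge indicators `ω`. -/
def graphOf {n : ℕ} (ω : Sym2 (Fin n) → Bool) : SimpleGraph (Fin n) where
  Adj u v := u ≠ v ∧ ω s(u, v) = true
  symm := by
    refine ⟨?_⟩
    intro u v h
    exact ⟨h.1.symm, by rw [Sym2.eq_swap]; exact h.2⟩
  loopless := ⟨fun u h => h.1 rfl⟩

/-- The number of `C↻ₖ`-free orientations of a graph. -/
noncomputable def countCkFree {V : Type*} (k : ℕ) (G : SimpleGraph V) : ℕ :=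
  Nat.card {D : GraphOrientation G // ¬ D.HasDirCycle k}


/- ===================== Auxiliary material ===================== -/

set_option maxHeartbeats 1000000

section Aux

lemma pi_msc {ι : Type*} [Countable ι] {α : ι → Type*} [∀ i, MeasurableSpace (α i)]
    [∀ i, MeasurableSingletonClass (α i)] : MeasurableSingletonClass (∀ i, α i) := by
  constructor
  intro f
  have : {f} = ⋂ i, (fun g : ∀ i, α i => g i) ⁻¹' {f i} := by
    ext g; simp [funext_iff]
  rw [this]
  exact MeasurableSet.iInter fun i => measurable_pi_apply i (measurableSet_singleton _)

lemma meas_fin {Ω : Type*} [MeasurableSpace Ω] [MeasurableSingletonClass Ω]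
    (μ : Measure Ω) (s : Finset Ω) : μ ↑s = ∑ x ∈ s, μ {x} := by
  have h : (↑s : Set Ω) = ⋃ x ∈ s, {x} := by ext y; simp
  rw [h, measure_biUnion_finset]
  · intro x _ y _ hxy
    simp [Function.onFun, Set.disjoint_singleton_left, hxy]
  · exact fun _ _ => measurableSet_singleton _

lemma bern_false {p : ℝ} : bern p {false} = ENNReal.ofReal (1 - p) := by
  simp [bern, Measure.dirac_apply_of_mem, Measure.dirac_apply' _ (measurableSet_singleton _)]

lemma bern_univ {p : ℝ} (h0 : 0 ≤ p) (h1 : p ≤ 1) : bern p Set.univ = 1 := by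
  simp only [bern, Measure.add_apply, Measure.smul_apply, smul_eq_mul, measure_univ, mul_one]
  rw [← ENNReal.ofReal_add h0 (by linarith), add_sub_cancel, ENNReal.ofReal_one]

/-- number of `false` coordinates among `E` -/
def Zc {n : ℕ} (ω : Sym2 (Fin n) → Bool) (E : Finset (Sym2 (Fin n))) : ℕ :=
  (E.filter fun e => ω e = false).card

lemma gnp_allFalse {n : ℕ} {p : ℝ} (hp0 : 0 ≤ p) (hp1 : p ≤ 1) (S : Finset (Sym2 (Fin n))) :
    gnp n p {ω | ∀ e ∈ S, ω e = false} = ENNReal.ofReal (1 - p) ^ S.card := by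
  have hset : {ω : Sym2 (Fin n) → Bool | ∀ e ∈ S, ω e = false}
      = Set.pi Set.univ (fun e => if e ∈ S then {false} else Set.univ) := by
    ext ω
    simp only [Set.mem_setOf_eq, Set.mem_pi, Set.mem_univ, forall_true_left]
    constructor
    · intro h e
      by_cases he : e ∈ S
      · simp [he, h e he]
      · simp [he]
    · intro h e he
      have := h e
      simpa [he] using this
  rw [hset, gnp, Measure.pi_pi]
  calc ∏ e : Sym2 (Fin n), bern p (if e ∈ S then ({false} : Set Bool) else Set.univ)
      = ∏ e : Sym2 (Fin n), (if e ∈ S then ENNReal.ofReal (1 - p) else 1) := by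
        refine Finset.prod_congr rfl fun e _ => ?_
        split
        · exact bern_false
        · exact bern_univ hp0 hp1
    _ = ∏ _e ∈ Finset.univ ∩ S, ENNReal.ofReal (1 - p) := Finset.prod_ite_mem _ _ _
    _ = ∏ _e ∈ S, ENNReal.ofReal (1 - p) := by rw [Finset.univ_inter]
    _ = ENNReal.ofReal (1 - p) ^ S.card := Finset.prod_const _

lemma tail_bound {n : ℕ} {p : ℝ} (hp0 : 0 ≤ p) (hp1 : p ≤ 1) (E : Finset (Sym2 (Fin n)))
    (t k : ℕ) :
    (t.choose k : ENNReal) * gnp n p {ω | t ≤ Zc ω E}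
      ≤ (E.card.choose k : ENNReal) * ENNReal.ofReal (1 - p) ^ k := by
  classical
  haveI : MeasurableSingletonClass (Sym2 (Fin n) → Bool) := pi_msc
  have hmeas : ∀ (Q : (Sym2 (Fin n) → Bool) → Prop) (_ : DecidablePred Q),
      gnp n p {ω | Q ω} = ∑ ω ∈ Finset.univ.filter Q, gnp n p {ω} := by
    intro Q _
    rw [← meas_fin]
    congr 1
    ext ω; simp
  have hsum : ∑ S ∈ E.powersetCard k, gnp n p {ω | ∀ e ∈ S, ω e = false}
      = (E.card.choose k : ENNReal) * ENNReal.ofReal (1 - p) ^ k := by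
    rw [Finset.sum_congr rfl (fun S hS => by
      rw [gnp_allFalse hp0 hp1, (Finset.mem_powersetCard.mp hS).2] :
      ∀ S ∈ E.powersetCard k, gnp n p {ω | ∀ e ∈ S, ω e = false}
        = ENNReal.ofReal (1 - p) ^ k),
      Finset.sum_const, Finset.card_powersetCard, nsmul_eq_mul]
  have hswap : ∑ S ∈ E.powersetCard k, gnp n p {ω | ∀ e ∈ S, ω e = false}
      = ∑ ω : Sym2 (Fin n) → Bool, ((Zc ω E).choose k : ENNReal) * gnp n p {ω} := by
    rw [Finset.sum_congr rfl
      (fun S _ => hmeas (fun ω => ∀ e ∈ S, ω e = false) (by infer_instance))]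
    rw [Finset.sum_congr rfl (fun S _ => Finset.sum_filter _ _)]
    rw [Finset.sum_comm]
    refine Finset.sum_congr rfl fun ω _ => ?_
    rw [← Finset.sum_filter, Finset.sum_const, nsmul_eq_mul]
    congr 2
    have hfe : (E.powersetCard k).filter (fun S => ∀ e ∈ S, ω e = false)
        = (E.filter fun e => ω e = false).powersetCard k := by
      ext S
      simp only [Finset.mem_filter, Finset.mem_powersetCard, Finset.subset_iff,
        Finset.mem_filter]
      constructor
      · rintro ⟨⟨hsub, hcard⟩, hall⟩
        exact ⟨fun x hx => ⟨hsub hx, hall x hx⟩, hcard⟩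
      · rintro ⟨hsub, hcard⟩
        exact ⟨⟨fun x hx => (hsub hx).1, hcard⟩, fun x hx => (hsub hx).2⟩
    rw [hfe, Finset.card_powersetCard]
    rfl
  have hT : (t.choose k : ENNReal) * gnp n p {ω | t ≤ Zc ω E}
      = ∑ ω ∈ Finset.univ.filter (fun ω => t ≤ Zc ω E), (t.choose k : ENNReal) * gnp n p {ω} := by
    rw [hmeas (fun ω => t ≤ Zc ω E) (by infer_instance), Finset.mul_sum]
  rw [hT, ← hsum, hswap]
  refine le_trans (Finset.sum_le_sum fun ω hω => ?_)
    (Finset.sum_le_sum_of_subset (Finset.filter_subset _ _))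
  have hω' : t ≤ Zc ω E := (Finset.mem_filter.mp hω).2
  exact mul_le_mul_left (Nat.cast_le.mpr (Nat.choose_le_choose k hω')) _

lemma choose_prod_bound {p : ℝ} (hp0 : 0 < p) (hp1 : p ≤ 1) {m t k : ℕ}
    (h4k : 4 * k ≤ m) (hkt : k ≤ t) (htx : (m : ℝ) - p * m / 2 < t) :
    (m.choose k : ℝ) * (1 - p) ^ k ≤ (1 - p / 3) ^ k * (t.choose k) := by
  have hfac : (0 : ℝ) < (k.factorial : ℝ) := by exact_mod_cast k.factorial_pos
  rw [← mul_le_mul_iff_left₀ hfac]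
  have hdm : ((m.descFactorial k : ℕ) : ℝ) = (m.choose k : ℝ) * (k.factorial : ℝ) := by
    rw [Nat.descFactorial_eq_factorial_mul_choose]; push_cast; ring
  have hdt : ((t.descFactorial k : ℕ) : ℝ) = (t.choose k : ℝ) * (k.factorial : ℝ) := by
    rw [Nat.descFactorial_eq_factorial_mul_choose]; push_cast; ring
  have hkey : ((m.descFactorial k : ℕ) : ℝ) * (1 - p) ^ k
      ≤ (1 - p / 3) ^ k * ((t.descFactorial k : ℕ) : ℝ) := by
    rw [Nat.descFactorial_eq_prod_range m k, Nat.descFactorial_eq_prod_range t k]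
    rw [Nat.cast_prod, Nat.cast_prod]
    have hL : (∏ i ∈ Finset.range k, ((m - i : ℕ) : ℝ)) * (1 - p) ^ k
        = ∏ i ∈ Finset.range k, (((m - i : ℕ) : ℝ) * (1 - p)) := by
      rw [Finset.prod_mul_distrib, Finset.prod_const, Finset.card_range]
    have hR : (1 - p / 3) ^ k * (∏ i ∈ Finset.range k, ((t - i : ℕ) : ℝ))
        = ∏ i ∈ Finset.range k, (((t - i : ℕ) : ℝ) * (1 - p / 3)) := by
      rw [Finset.prod_mul_distrib, Finset.prod_const, Finset.card_range]; ring
    rw [hL, hR]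
    refine Finset.prod_le_prod (fun i _ => ?_) (fun i hi => ?_)
    · exact mul_nonneg (Nat.cast_nonneg _) (by linarith)
    · have hik : i < k := Finset.mem_range.mp hi
      have him : i ≤ m := le_trans hik.le (le_trans (Nat.le_mul_of_pos_left k (by norm_num)) h4k)
      have hit : i ≤ t := le_trans hik.le hkt
      rw [Nat.cast_sub him, Nat.cast_sub hit]
      have hi' : (i : ℝ) + 1 ≤ k := by exact_mod_cast hik
      have h4 : 4 * (k : ℝ) ≤ m := by exact_mod_cast h4k
      nlinarith [mul_nonneg (by linarith : (0:ℝ) ≤ (t:ℝ) - ((m:ℝ) - p * m / 2))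
        (by linarith : (0:ℝ) ≤ 1 - p / 3), sq_nonneg p, mul_pos hp0 hp0]
  calc (m.choose k : ℝ) * (1 - p) ^ k * (k.factorial : ℝ)
      = ((m.descFactorial k : ℕ) : ℝ) * (1 - p) ^ k := by rw [hdm]; ring
    _ ≤ (1 - p / 3) ^ k * ((t.descFactorial k : ℕ) : ℝ) := hkey
    _ = (1 - p / 3) ^ k * (t.choose k) * (k.factorial : ℝ) := by rw [hdt]; ring

lemma perPair {n : ℕ} {p : ℝ} (hp0 : 0 < p) (hp1 : p ≤ 1) {a b : ℕ}
    (ha1 : 1 ≤ a) (hab : a ≤ b) (hα : (a : ℝ) * p = 2 ^ 6 * Real.log n)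
    (E : Finset (Sym2 (Fin n))) (hE : E.card = a * b) :
    gnp n p {ω | ((E.filter fun e => ω e = true).card : ℝ) < p * E.card / 2}
      ≤ ENNReal.ofReal (2 / (n : ℝ) ^ (5 * b)) := by
  classical
  set m := E.card with hm
  clear_value m
  have hb1 : 1 ≤ b := le_trans ha1 hab
  have hm1 : 1 ≤ m := by rw [hE]; exact Nat.one_le_iff_ne_zero.mpr (by positivity)
  have hlog : 0 < Real.log n := by nlinarith [hα, (by exact_mod_cast ha1 : (1:ℝ) ≤ (a:ℝ))]
  have hn0 : (0 : ℝ) < n := by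
    rcases Nat.eq_zero_or_pos n with h | h
    · subst h; simp [Real.log_zero] at hlog
    · exact_mod_cast h
  set x := (m : ℝ) - p * m / 2 with hxdef
  clear_value x
  have hx0 : 0 ≤ x := by
    have : p * m / 2 ≤ m / 2 := by
      have : (0:ℝ) ≤ (m:ℝ) := Nat.cast_nonneg _
      nlinarith
    have hm0 : (0:ℝ) ≤ (m:ℝ) := Nat.cast_nonneg _
    simp only [hxdef]; linarith
  set t := ⌊x⌋₊ + 1 with htdef
  set k := m / 4 with hkdef
  clear_value t k
  have htx : x < (t : ℝ) := by
    rw [htdef]; push_cast; exact Nat.lt_floor_add_one x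
  have h4k : 4 * k ≤ m := by omega
  have hkt : k ≤ t := by
    have hk4 : (k : ℝ) ≤ (m : ℝ) / 4 := by
      have : k * 4 ≤ m := by omega
      have h' : ((k * 4 : ℕ) : ℝ) ≤ (m : ℝ) := by exact_mod_cast this
      push_cast at h'
      linarith
    have hm0 : (0:ℝ) ≤ (m:ℝ) := Nat.cast_nonneg _
    have hx2 : (m:ℝ)/2 ≤ x := by rw [hxdef]; nlinarith
    have hkt' : (k : ℝ) < (t : ℝ) := by linarith
    exact_mod_cast hkt'.le
  -- event inclusion
  have hsub : {ω : Sym2 (Fin n) → Bool | ((E.filter fun e => ω e = true).card : ℝ) < p * m / 2}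
      ⊆ {ω | t ≤ Zc ω E} := by
    intro ω hω
    simp only [Set.mem_setOf_eq] at hω ⊢
    have hsplit : (E.filter fun e => ω e = true).card + Zc ω E = m := by
      rw [Zc, hm]
      rw [← Finset.card_filter_add_card_filter_not (s := E) (p := fun e => ω e = true)]
      congr 1
      apply Finset.card_bij (fun e _ => e) <;> simp [Bool.not_eq_true]
    have hZreal : x < (Zc ω E : ℝ) := by
      have : ((E.filter fun e => ω e = true).card : ℝ) + (Zc ω E : ℝ) = m := by
        exact_mod_cast hsplit
      simp only [hxdef]; linarith
    have : ⌊x⌋₊ < Zc ω E := (Nat.floor_lt hx0).mpr hZreal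
    omega
  have hmono := measure_mono (μ := gnp n p) hsub
  -- tail bound
  have htail := tail_bound hp0.le hp1 E t k
  rw [← hm] at htail
  -- real inequality
  have hRmain : (m.choose k : ℝ) * (1 - p) ^ k ≤ 2 / (n : ℝ) ^ (5 * b) * (t.choose k) := by
    refine le_trans (choose_prod_bound hp0 hp1 h4k hkt (hxdef ▸ htx)) ?_
    have hR2 : (1 - p / 3) ^ k ≤ Real.exp (-(p * k) / 3) := by
      have h1 : 1 - p / 3 ≤ Real.exp (-(p / 3)) := by
        have := Real.add_one_le_exp (-(p / 3))
        linarith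
      have h2 : (1 - p / 3 : ℝ) ≥ 0 := by linarith
      calc (1 - p / 3) ^ k ≤ Real.exp (-(p / 3)) ^ k := pow_le_pow_left₀ h2 h1 k
        _ = Real.exp ((k : ℝ) * (-(p / 3))) := (Real.exp_nat_mul _ k).symm
        _ = Real.exp (-(p * k) / 3) := by ring_nf
    have hR3 : Real.exp (-(p * k) / 3) ≤ 2 / (n : ℝ) ^ (5 * b) := by
      rw [le_div_iff₀ (by positivity)]
      have hnpow : ((n : ℝ) ^ (5 * b)) = Real.exp ((5 * b : ℕ) * Real.log n) := by
        rw [← Real.exp_log hn0, ← Real.exp_nat_mul, Real.exp_log hn0]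
      rw [mul_comm, hnpow, ← Real.exp_add]
      rw [show (2 : ℝ) = Real.exp (Real.log 2) from (Real.exp_log two_pos).symm]
      rw [Real.exp_le_exp]
      have hk4' : (m : ℝ) - 3 ≤ 4 * (k : ℝ) := by
        have : m ≤ 4 * k + 3 := by omega
        have h' : (m : ℝ) ≤ ((4 * k + 3 : ℕ) : ℝ) := by exact_mod_cast this
        push_cast at h'
        linarith
      have hpm : p * m = 64 * b * Real.log n := by
        rw [hE]
        push_cast
        nlinarith [hα]
      have hpk : p * (m : ℝ) - 3 * p ≤ 4 * (p * k) := by nlinarith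
      have hblog : 0 ≤ (b : ℝ) * Real.log n :=
        mul_nonneg (by exact_mod_cast Nat.zero_le b) hlog.le
      have h2 : (0.6931471803 : ℝ) < Real.log 2 := Real.log_two_gt_d9
      have hb : (1 : ℝ) ≤ (b : ℝ) := by exact_mod_cast hb1
      push_cast
      nlinarith [mul_le_mul_of_nonneg_left hb hlog.le]
    calc (1 - p / 3) ^ k * (t.choose k)
        ≤ Real.exp (-(p * k) / 3) * (t.choose k) := by
          exact mul_le_mul_of_nonneg_right hR2 (Nat.cast_nonneg _)
      _ ≤ 2 / (n : ℝ) ^ (5 * b) * (t.choose k) := by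
          exact mul_le_mul_of_nonneg_right hR3 (Nat.cast_nonneg _)
  -- assemble in ENNReal
  have hchoose_pos : (0 : ℕ) < t.choose k := Nat.choose_pos hkt
  have hENN : (t.choose k : ENNReal) * gnp n p {ω | t ≤ Zc ω E}
      ≤ (t.choose k : ENNReal) * ENNReal.ofReal (2 / (n : ℝ) ^ (5 * b)) := by
    refine le_trans htail ?_
    have : (m.choose k : ENNReal) * ENNReal.ofReal (1 - p) ^ k
        = ENNReal.ofReal ((m.choose k : ℝ) * (1 - p) ^ k) := by
      rw [ENNReal.ofReal_mul (by positivity), ← ENNReal.ofReal_pow (by linarith)]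
      congr 1
      simp [ENNReal.ofReal_natCast]
    rw [this]
    have h2 : (t.choose k : ENNReal) * ENNReal.ofReal (2 / (n : ℝ) ^ (5 * b))
        = ENNReal.ofReal (2 / (n : ℝ) ^ (5 * b) * (t.choose k)) := by
      rw [ENNReal.ofReal_mul (by positivity), mul_comm]
      congr 1
      simp [ENNReal.ofReal_natCast]
    rw [h2]
    exact ENNReal.ofReal_le_ofReal hRmain
  have hcan := (ENNReal.mul_le_mul_iff_right (a := (t.choose k : ENNReal))
    (by exact_mod_cast Nat.pos_iff_ne_zero.mp hchoose_pos) (by simp)).mp hENN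
  exact le_trans hmono hcan

/-- the (unordered) edge positions between `A` and `B` -/
def edgs {n : ℕ} (A B : Finset (Fin n)) : Finset (Sym2 (Fin n)) :=
  (A ×ˢ B).image fun q => s(q.1, q.2)

lemma edgs_card {n : ℕ} {A B : Finset (Fin n)} (hAB : Disjoint A B) :
    (edgs A B).card = A.card * B.card := by
  rw [edgs, Finset.card_image_of_injOn, Finset.card_product]
  intro q hq q' hq' he
  simp only [Finset.mem_coe, Finset.mem_product] at hq hq'
  have he' : (q.1, q.2) = (q'.1, q'.2) ∨ (q.1, q.2) = (q'.2, q'.1) := by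
    rwa [Sym2.mk_eq_mk_iff] at he
  rcases he' with he' | he'
  · exact Prod.ext (congrArg Prod.fst he') (congrArg Prod.snd he')
  · exfalso
    have h1 : q.1 = q'.2 := congrArg Prod.fst he'
    exact Finset.disjoint_left.mp hAB hq.1 (h1 ▸ hq'.2)

lemma pathEdge_of_dir {n : ℕ} {G : SimpleGraph (Fin n)} (D : GraphOrientation G) {X : Set (Fin n)}
    {u v : Fin n} (hu : u ∉ X) (hv : v ∉ X) (huv : u ≠ v) (h : D.dir u v) :
    D.PathEdge X 1 u v := by
  refine ⟨![u, v], ?_, ?_, rfl, rfl, ?_⟩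
  · intro i j hij
    fin_cases i <;> fin_cases j <;> simp_all
  · intro i; fin_cases i <;> simp [hu, hv]
  · intro i
    fin_cases i
    simpa using h

lemma det_bound {n : ℕ} (ω : Sym2 (Fin n) → Bool) (D : GraphOrientation (graphOf ω))
    (A' B X : Set (Fin n)) (hAB : Disjoint A' B) (hAX : Disjoint A' X) (hBX : Disjoint B X) :
    ((edgs (Set.toFinite A').toFinset (Set.toFinite B).toFinset).filter
      fun e => ω e = true).card ≤ D.eBoth X 1 A' B := by
  classical
  set FA := (Set.toFinite A').toFinset
  set FB := (Set.toFinite B).toFinset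
  set T : Finset (Fin n × Fin n) := (FA ×ˢ FB).filter (fun q => ω s(q.1, q.2) = true) with hT
  have step1 : (edgs FA FB).filter (fun e => ω e = true) = T.image fun q => s(q.1, q.2) := by
    ext e
    simp only [edgs, hT, Finset.mem_filter, Finset.mem_image, Finset.mem_product]
    constructor
    · rintro ⟨⟨q, hq, rfl⟩, ht⟩; exact ⟨q, ⟨hq, ht⟩, rfl⟩
    · rintro ⟨q, ⟨hq, ht⟩, rfl⟩; exact ⟨⟨q, hq, rfl⟩, ht⟩
  rw [step1]
  refine le_trans (Finset.card_image_le) ?_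
  rw [← Set.ncard_coe_finset]
  refine le_trans (Set.ncard_le_ncard ?_ (Set.toFinite _))
    (Set.ncard_union_le _ _)
  rintro ⟨u, v⟩ hq
  simp only [hT, Finset.coe_filter, Finset.mem_product, Set.mem_setOf_eq,
    Set.Finite.mem_toFinset, FA, FB] at hq
  obtain ⟨⟨hu, hv⟩, ht⟩ := hq
  have huv : u ≠ v := fun h => (hAB.ne_of_mem hu hv) h
  have hadj : (graphOf ω).Adj u v := ⟨huv, ht⟩
  have huX : u ∉ X := fun h => (hAX.ne_of_mem hu h) rfl
  have hvX : v ∉ X := fun h => (hBX.ne_of_mem hv h) rfl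
  rcases D.total hadj with hd | hd
  · exact Or.inl ⟨hu, hv, pathEdge_of_dir D huX hvX huv hd⟩
  · exact Or.inr ⟨hu, hv, pathEdge_of_dir D hvX huX huv.symm hd⟩

/-- the bad event for a pair of vertex sets -/
def badSet (n : ℕ) (p : ℝ) (A B : Finset (Fin n)) : Set (Sym2 (Fin n) → Bool) :=
  {ω | (((edgs A B).filter fun e => ω e = true).card : ℝ) < p * (edgs A B).card / 2}

/-- the collection of relevant pairs of vertex sets -/
noncomputable def pairs (n : ℕ) (p : ℝ) : Finset (Finset (Fin n) × Finset (Fin n)) :=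
  @Finset.filter _ (fun AB => 1 ≤ AB.1.card ∧ AB.1.card ≤ AB.2.card ∧ Disjoint AB.1 AB.2 ∧
    ((AB.1.card : ℝ) = alphaP n p)) (Classical.decPred _) Finset.univ

lemma mem_pairs {n : ℕ} {p : ℝ} {q : Finset (Fin n) × Finset (Fin n)} :
    q ∈ pairs n p ↔ (1 ≤ q.1.card ∧ q.1.card ≤ q.2.card ∧ Disjoint q.1 q.2 ∧
      ((q.1.card : ℝ) = alphaP n p)) := by
  rw [pairs]
  rw [@Finset.mem_filter _ _ (Classical.decPred _)]
  simp

lemma geom_tail {q : ℝ} (h0 : 0 ≤ q) (h1 : q ≤ 1/2) (n : ℕ) :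
    ∑ j ∈ Finset.Icc 1 n, q ^ j ≤ 2 * q := by
  have hEq : ∀ m : ℕ, ∑ j ∈ Finset.Icc 1 m, q ^ j = q * ∑ j ∈ Finset.range m, q ^ j := by
    intro m
    induction m with
    | zero => simp
    | succ m ih =>
      rw [Finset.sum_Icc_succ_top (by omega), ih, Finset.sum_range_succ]
      ring
  rw [hEq]
  have hgs := geom_sum_mul q n
  have hqn : 0 ≤ q ^ n := pow_nonneg h0 n
  have hsn : 0 ≤ ∑ j ∈ Finset.range n, q ^ j :=
    Finset.sum_nonneg fun j _ => pow_nonneg h0 j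
  nlinarith

lemma sum_subsets_le {n : ℕ} {x : ℝ} (hx : 0 ≤ x) (hnx : (n : ℝ) * x ≤ 1/2) :
    ∑ A ∈ Finset.univ.filter (fun A : Finset (Fin n) => 1 ≤ A.card), x ^ A.card
      ≤ 2 * ((n : ℝ) * x) := by
  classical
  set S := Finset.univ.filter (fun A : Finset (Fin n) => 1 ≤ A.card) with hS
  rw [Finset.sum_comp (fun j : ℕ => x ^ j) Finset.card]
  have hcount : ∀ j : ℕ, (S.filter fun A => A.card = j).card ≤ n ^ j := by
    intro j
    have h1 : (S.filter fun A => A.card = j)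
        ⊆ Finset.univ.filter (fun A : Finset (Fin n) => A.card = j) := by
      intro A hA
      simp only [Finset.mem_filter] at hA ⊢
      exact ⟨Finset.mem_univ _, hA.2⟩
    have h2 : (Finset.univ.filter (fun A : Finset (Fin n) => A.card = j))
        = Finset.powersetCard j Finset.univ := by
      rw [Finset.powersetCard_eq_filter, Finset.powerset_univ]
    calc (S.filter fun A => A.card = j).card
        ≤ (Finset.univ.filter (fun A : Finset (Fin n) => A.card = j)).card :=
          Finset.card_le_card h1
      _ = (Fintype.card (Fin n)).choose j := by rw [h2, Finset.card_powersetCard]; simp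
      _ ≤ n ^ j := by rw [Fintype.card_fin]; exact Nat.choose_le_pow n j
  calc ∑ j ∈ S.image Finset.card, (S.filter fun A => A.card = j).card • x ^ j
      ≤ ∑ j ∈ S.image Finset.card, ((n : ℝ) * x) ^ j := by
        refine Finset.sum_le_sum fun j hj => ?_
        rw [nsmul_eq_mul, mul_pow]
        refine mul_le_mul ?_ le_rfl (pow_nonneg hx j) (pow_nonneg (Nat.cast_nonneg n) j)
        calc ((S.filter fun A => A.card = j).card : ℝ) ≤ ((n ^ j : ℕ) : ℝ) := by
              exact_mod_cast hcount j
          _ = (n : ℝ) ^ j := by push_cast; ring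
    _ ≤ ∑ j ∈ Finset.Icc 1 n, ((n : ℝ) * x) ^ j := by
        refine Finset.sum_le_sum_of_subset_of_nonneg ?_
          (fun j _ _ => pow_nonneg (mul_nonneg (Nat.cast_nonneg n) hx) j)
        intro j hj
        obtain ⟨A, hA, rfl⟩ := Finset.mem_image.mp hj
        rw [hS, Finset.mem_filter] at hA
        refine Finset.mem_Icc.mpr ⟨hA.2, ?_⟩
        calc A.card ≤ Fintype.card (Fin n) := Finset.card_le_univ A
          _ = n := Fintype.card_fin n
    _ ≤ 2 * ((n : ℝ) * x) := geom_tail (mul_nonneg (Nat.cast_nonneg n) hx) hnx n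

lemma total_bound {n : ℕ} {p : ℝ} (hp0 : 0 < p) (hp1 : p ≤ 1) (hn : 2 ≤ n) :
    gnp n p (⋃ q ∈ pairs n p, badSet n p q.1 q.2) ≤ ENNReal.ofReal (8 / (n : ℝ) ^ 3) := by
  classical
  have hn0 : (0 : ℝ) < n := by positivity
  have hn2 : (2 : ℝ) ≤ n := by exact_mod_cast hn
  refine le_trans (measure_biUnion_finset_le _ _) ?_
  have hmem : ∀ q ∈ pairs n p, 1 ≤ q.1.card ∧ q.1.card ≤ q.2.card ∧ Disjoint q.1 q.2 ∧
      ((q.1.card : ℝ) = alphaP n p) := by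
    intro q hq
    exact mem_pairs.mp hq
  have hper : ∀ q ∈ pairs n p, gnp n p (badSet n p q.1 q.2)
      ≤ ENNReal.ofReal (2 / (n : ℝ) ^ (5 * q.2.card)) := by
    intro q hq
    obtain ⟨h1, h2, h3, h4⟩ := hmem q hq
    have hα : (q.1.card : ℝ) * p = 2 ^ 6 * Real.log n := by
      rw [h4, alphaP]
      field_simp
    exact perPair hp0 hp1 h1 h2 hα (edgs q.1 q.2) (edgs_card h3)
  refine le_trans (Finset.sum_le_sum hper) ?_
  rw [← ENNReal.ofReal_sum_of_nonneg (fun q _ => by positivity)]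
  refine ENNReal.ofReal_le_ofReal ?_
  -- real computation
  set u : ℝ := (n : ℝ)⁻¹ with hu
  have hu0 : 0 ≤ u := by positivity
  have hu1 : u ≤ 1 := by
    rw [hu]
    rw [inv_le_one_iff₀]
    right; linarith
  have hterm : ∀ q ∈ pairs n p,
      2 / (n : ℝ) ^ (5 * q.2.card) ≤ 2 * ((u ^ 2) ^ q.1.card * (u ^ 3) ^ q.2.card) := by
    intro q hq
    obtain ⟨h1, h2, _, _⟩ := hmem q hq
    have hrw : 2 / (n : ℝ) ^ (5 * q.2.card) = 2 * u ^ (5 * q.2.card) := by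
      rw [hu, inv_pow]
      ring
    rw [hrw]
    have hexp : (u ^ 2) ^ q.1.card * (u ^ 3) ^ q.2.card = u ^ (2 * q.1.card + 3 * q.2.card) := by
      rw [← pow_mul, ← pow_mul, ← pow_add]
    rw [hexp]
    have : u ^ (5 * q.2.card) ≤ u ^ (2 * q.1.card + 3 * q.2.card) :=
      pow_le_pow_of_le_one hu0 hu1 (by omega)
    linarith
  refine le_trans (Finset.sum_le_sum hterm) ?_
  rw [← Finset.mul_sum]
  have hS : pairs n p ⊆ (Finset.univ.filter (fun A : Finset (Fin n) => 1 ≤ A.card)) ×ˢ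
      (Finset.univ.filter (fun A : Finset (Fin n) => 1 ≤ A.card)) := by
    intro q hq
    obtain ⟨h1, h2, _, _⟩ := hmem q hq
    rw [Finset.mem_product]
    exact ⟨Finset.mem_filter.mpr ⟨Finset.mem_univ _, h1⟩,
      Finset.mem_filter.mpr ⟨Finset.mem_univ _, le_trans h1 h2⟩⟩
  have hsum2 : ∑ q ∈ pairs n p, (u ^ 2) ^ q.1.card * (u ^ 3) ^ q.2.card
      ≤ (2 * ((n : ℝ) * u ^ 2)) * (2 * ((n : ℝ) * u ^ 3)) := by
    calc ∑ q ∈ pairs n p, (u ^ 2) ^ q.1.card * (u ^ 3) ^ q.2.card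
        ≤ ∑ q ∈ (Finset.univ.filter (fun A : Finset (Fin n) => 1 ≤ A.card)) ×ˢ
            (Finset.univ.filter (fun A : Finset (Fin n) => 1 ≤ A.card)),
            (u ^ 2) ^ q.1.card * (u ^ 3) ^ q.2.card := by
          refine Finset.sum_le_sum_of_subset_of_nonneg hS fun q _ _ => by positivity
      _ = (∑ A ∈ Finset.univ.filter (fun A : Finset (Fin n) => 1 ≤ A.card), (u ^ 2) ^ A.card)
          * (∑ B ∈ Finset.univ.filter (fun A : Finset (Fin n) => 1 ≤ A.card), (u ^ 3) ^ B.card) := by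
          rw [Finset.sum_mul_sum]
          rw [Finset.sum_product]
      _ ≤ (2 * ((n : ℝ) * u ^ 2)) * (2 * ((n : ℝ) * u ^ 3)) := by
          have hnu2 : (n : ℝ) * u ^ 2 ≤ 1 / 2 := by
            rw [hu]
            rw [show (n : ℝ) * ((n:ℝ)⁻¹) ^ 2 = ((n:ℝ))⁻¹ by field_simp]
            rw [inv_le_comm₀ hn0 (by norm_num)]
            linarith
          have hnu3 : (n : ℝ) * u ^ 3 ≤ 1 / 2 := by
            rw [hu]
            rw [show (n : ℝ) * ((n:ℝ)⁻¹) ^ 3 = (((n:ℝ))⁻¹) ^ 2 by field_simp]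
            calc (((n:ℝ))⁻¹) ^ 2 ≤ (1/2 : ℝ) ^ 2 := by
                  refine pow_le_pow_left₀ (by positivity) ?_ 2
                  rw [inv_le_comm₀ hn0 (by norm_num)]
                  linarith
              _ ≤ 1/2 := by norm_num
          refine mul_le_mul (sum_subsets_le (by positivity) hnu2)
            (sum_subsets_le (by positivity) hnu3)
            (Finset.sum_nonneg fun B _ => by positivity) (by positivity)
  calc 2 * ∑ q ∈ pairs n p, (u ^ 2) ^ q.1.card * (u ^ 3) ^ q.2.card
      ≤ 2 * ((2 * ((n : ℝ) * u ^ 2)) * (2 * ((n : ℝ) * u ^ 3))) := by linarith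
    _ = 8 * ((n : ℝ) * (n : ℝ)) * u ^ 5 := by ring
    _ = 8 / (n : ℝ) ^ 3 := by
        rw [hu]
        field_simp
  
lemma reduction {n : ℕ} {p : ℝ} (hp0 : 0 < p) (ℓ : ℕ) (hℓ : 1 ≤ ℓ)
    (ω : Sym2 (Fin n) → Bool) (hω : ω ∉ ⋃ q ∈ pairs n p, badSet n p q.1 q.2)
    (D : GraphOrientation (graphOf ω)) :
    D.LocallyDense Set.univ p ℓ 1 (alphaP n p) := by
  classical
  intro A' B X _ _ _ hAB hAX hBX hcard hlow _ _
  have hexp : (((ℓ : ℝ) - (1:ℕ) + 1) / ℓ) = 1 := by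
    have hℓ0 : (ℓ : ℝ) ≠ 0 := by
      have : (1 : ℝ) ≤ (ℓ : ℝ) := by exact_mod_cast hℓ
      linarith
    field_simp
    push_cast; ring
  rw [hexp, Real.rpow_one]
  rcases Nat.eq_zero_or_pos A'.ncard with h0 | hpos
  · rw [h0]
    simp only [Nat.cast_zero, mul_zero, zero_mul]
    positivity
  · set FA := (Set.toFinite A').toFinset with hFA
    set FB := (Set.toFinite B).toFinset with hFB
    have hcardA : FA.card = A'.ncard := (Set.ncard_eq_toFinset_card _ _).symm
    have hcardB : FB.card = B.ncard := (Set.ncard_eq_toFinset_card _ _).symm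
    have hd : Disjoint FA FB := by
      rw [Finset.disjoint_left]
      intro x hx hx'
      rw [hFA, Set.Finite.mem_toFinset] at hx
      rw [hFB, Set.Finite.mem_toFinset] at hx'
      exact Set.disjoint_left.mp hAB hx hx'
    have hq : (FA, FB) ∈ pairs n p := by
      rw [mem_pairs]
      refine ⟨?_, ?_, hd, ?_⟩
      · rw [hcardA]; exact hpos
      · rw [hcardA, hcardB]
        have : (A'.ncard : ℝ) ≤ (B.ncard : ℝ) := by
          rw [hcard]
          calc alphaP n p = 1 * alphaP n p := (one_mul _).symm
            _ ≤ (B.ncard : ℝ) := by exact_mod_cast hlow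
        exact_mod_cast this
      · rw [hcardA]; exact hcard
    have hnb : ω ∉ badSet n p FA FB := fun hbad => hω (Set.mem_biUnion hq hbad)
    rw [badSet, Set.mem_setOf_eq, not_lt] at hnb
    have hdb := det_bound ω D A' B X hAB hAX hBX
    have hE : ((edgs FA FB).card : ℝ) = (A'.ncard : ℝ) * (B.ncard : ℝ) := by
      rw [edgs_card hd, hcardA, hcardB]
      push_cast
      ring
    have hdb' : (((edgs FA FB).filter fun e => ω e = true).card : ℝ)
        ≤ (D.eBoth X 1 A' B : ℝ) := by exact_mod_cast hdb
    calc (1/2) * p * (A'.ncard : ℝ) * (B.ncard : ℝ)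
        = p * ((A'.ncard : ℝ) * (B.ncard : ℝ)) / 2 := by ring
      _ = p * ((edgs FA FB).card : ℝ) / 2 := by rw [hE]
      _ ≤ (((edgs FA FB).filter fun e => ω e = true).card : ℝ) := hnb
      _ ≤ (D.eBoth X 1 A' B : ℝ) := hdb'

end Aux

/-- Lemma 3.2. For fixed `ℓ ≥ 1` and `p = p(n) ∈ (0,1]`, with high
probability every orientation of `G(n,p)` is `1`-locally-dense. -/
theorem whp_every_orientation_one_locally_dense
    (ℓ : ℕ) (hℓ : 1 ≤ ℓ) (p : ℕ → ℝ) (hp : ∀ n, 0 < p n ∧ p n ≤ 1) :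
    Tendsto (fun n : ℕ =>
      (gnp n (p n) {ω | ∀ D : GraphOrientation (graphOf ω),
        D.LocallyDense Set.univ (p n) ℓ 1 (alphaP n (p n))}).toReal)
      atTop (nhds 1) := by
  classical
  set F := fun n : ℕ => (gnp n (p n) {ω | ∀ D : GraphOrientation (graphOf ω),
        D.LocallyDense Set.univ (p n) ℓ 1 (alphaP n (p n))}).toReal with hF
  have key : ∀ n : ℕ, 2 ≤ n → 1 - 8 / (n : ℝ) ^ 3 ≤ F n ∧ F n ≤ 1 := by
    intro n hn
    obtain ⟨hp0, hp1⟩ := hp n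
    haveI : IsProbabilityMeasure (bern (p n)) := ⟨bern_univ hp0.le hp1⟩
    haveI : IsProbabilityMeasure (gnp n (p n)) := by
      rw [gnp]; infer_instance
    haveI : MeasurableSingletonClass (Sym2 (Fin n) → Bool) := pi_msc
    set good := {ω : Sym2 (Fin n) → Bool | ∀ D : GraphOrientation (graphOf ω),
        D.LocallyDense Set.univ (p n) ℓ 1 (alphaP n (p n))} with hgood
    have hcompl : goodᶜ ⊆ ⋃ q ∈ pairs n (p n), badSet n (p n) q.1 q.2 := by
      intro ω hω
      by_contra hnot
      exact hω fun D => reduction hp0 ℓ hℓ ω hnot D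
    have hbound : gnp n (p n) goodᶜ ≤ ENNReal.ofReal (8 / (n : ℝ) ^ 3) :=
      le_trans (measure_mono hcompl) (total_bound hp0 hp1 hn)
    have hgoodmeas : MeasurableSet good := (Set.to_countable good).measurableSet
    have hμ : gnp n (p n) good = 1 - gnp n (p n) goodᶜ := by
      have := prob_compl_eq_one_sub (μ := gnp n (p n)) hgoodmeas.compl
      rwa [compl_compl] at this
    have h1 : (gnp n (p n) goodᶜ).toReal ≤ 8 / (n : ℝ) ^ 3 := by
      have := ENNReal.toReal_mono ENNReal.ofReal_ne_top hbound
      rwa [ENNReal.toReal_ofReal (by positivity)] at this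
    have h2 : F n = 1 - (gnp n (p n) goodᶜ).toReal := by
      rw [hF]
      simp only
      rw [← hgood, hμ, ENNReal.toReal_sub_of_le (prob_le_one (μ := gnp n (p n)) (s := goodᶜ)) ENNReal.one_ne_top]
      simp
    constructor
    · rw [h2]; linarith
    · rw [h2]
      have : 0 ≤ (gnp n (p n) goodᶜ).toReal := ENNReal.toReal_nonneg
      linarith
  have hg : Tendsto (fun n : ℕ => 1 - 8 / (n : ℝ) ^ 3) atTop (nhds 1) := by
    have h8 : Tendsto (fun n : ℕ => 8 / (n : ℝ) ^ 3) atTop (nhds 0) :=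
      Tendsto.div_atTop tendsto_const_nhds
        ((tendsto_pow_atTop (by norm_num)).comp tendsto_natCast_atTop_atTop)
    have := tendsto_const_nhds (x := (1 : ℝ)) (f := atTop (α := ℕ)) |>.sub h8
    simpa using this
  refine tendsto_of_tendsto_of_tendsto_of_le_of_le' hg tendsto_const_nhds ?_ ?_
  · filter_upwards [eventually_ge_atTop 2] with n hn
    exact (key n hn).1
  · filter_upwards [eventually_ge_atTop 2] with n hn
    exact (key n hn).2
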